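/- Let β be a real number with β ≥ e² + 1, and let p ∈ H₁. If the function z ↦ p(z) + β·z·p′(z) is subordinate to z ↦ e^z on 𝔻, then p is subordinate to z ↦ e^z on 𝔻. -/

import Mathlib

open Complex

noncomputable section

/-- The open unit disk in the complex plane. -/
def unitDisk : Set ℂ := Metric.ball 0 1

/-- `f` is subordinate to `g` on the open unit disk: there is an analytic
Schwarz function `w` with `w 0 = 0`, `‖w z‖ < 1` on the disk, and `f = g ∘ w`. -/
def Subord (f g : ℂ → ℂ) : Prop :=
  ∃ w : ℂ → ℂ, DifferentiableOn ℂ w unitDisk ∧ w 0 = 0 ∧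
    (∀ z ∈ unitDisk, ‖w z‖ < 1) ∧ ∀ z ∈ unitDisk, f z = g (w z)

/-!
Put `q = p + β z p'`. Since `d/dt (t^{1/β} p(tz)) = β⁻¹ t^{1/β - 1} q(tz)`, the value `p(z)` is the
average of `q` over the radius `[0, z]` against the probability weight `β⁻¹ t^{1/β - 1} dt`.
If `q = exp ∘ w` with `w` a Schwarz function, Schwarz's lemma gives `‖q(ζ) - 1‖ ≤ 2‖ζ‖`, and
averaging yields `‖p(z) - 1‖ ≤ 2/(β + 1) ≤ 1/2`. Then `log ∘ p` is a Schwarz function with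
`p = exp ∘ log ∘ p`.
-/

lemma mem_unitDisk_iff {z : ℂ} : z ∈ unitDisk ↔ ‖z‖ < 1 := mem_ball_zero_iff

lemma ofReal_mul_mem_unitDisk {t : ℝ} (ht : t ∈ Set.Icc (0 : ℝ) 1) {z : ℂ} (hz : z ∈ unitDisk) :
    (t : ℂ) * z ∈ unitDisk := by
  rw [mem_unitDisk_iff, norm_mul, norm_real, Real.norm_of_nonneg ht.1] at *
  nlinarith [ht.2, norm_nonneg z]

lemma integral_inv_mul_rpow_inv_sub_one {β : ℝ} (hβ : 0 < β) :
    ∫ t in (0 : ℝ)..1, β⁻¹ * t ^ (β⁻¹ - 1) = 1 := by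
  have hβ' : 0 < β⁻¹ := inv_pos.mpr hβ
  rw [intervalIntegral.integral_const_mul, integral_rpow (Or.inl (by linarith)), sub_add_cancel,
    Real.one_rpow, Real.zero_rpow hβ'.ne', sub_zero]
  field_simp

lemma integral_inv_mul_rpow_inv {β : ℝ} (hβ : 0 < β) :
    ∫ t in (0 : ℝ)..1, β⁻¹ * t ^ β⁻¹ = 1 / (β + 1) := by
  have hβ' : 0 < β⁻¹ := inv_pos.mpr hβ
  rw [intervalIntegral.integral_const_mul, integral_rpow (Or.inl (by linarith)),
    Real.one_rpow, Real.zero_rpow (by positivity)]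
  field_simp
  ring

lemma intervalIntegrable_inv_mul_rpow_inv_sub_one_mul {β : ℝ} (hβ : 0 < β) {g : ℝ → ℂ}
    (hg : ContinuousOn g (Set.Icc 0 1)) :
    IntervalIntegrable (fun t : ℝ => ((β⁻¹ * t ^ (β⁻¹ - 1) : ℝ) : ℂ) * g t)
      MeasureTheory.volume 0 1 := by
  have hweight : IntervalIntegrable (fun t : ℝ => β⁻¹ * t ^ (β⁻¹ - 1)) MeasureTheory.volume 0 1 :=
    (intervalIntegral.intervalIntegrable_rpow' (by simpa using hβ)).const_mul _
  refine IntervalIntegrable.mul_continuousOn ⟨hweight.1.ofReal, hweight.2.ofReal⟩ ?_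
  rwa [Set.uIcc_of_le zero_le_one]

section RadialAverage

variable {p : ℂ → ℂ} {β : ℝ} {z : ℂ}

lemma hasDerivAt_rpow_inv_mul_comp (hp : DifferentiableOn ℂ p unitDisk) (hβ : 0 < β)
    (hz : z ∈ unitDisk) {t : ℝ} (ht : t ∈ Set.Ioo (0 : ℝ) 1) :
    HasDerivAt (fun s : ℝ => ((s ^ β⁻¹ : ℝ) : ℂ) * p (s * z))
      (((β⁻¹ * t ^ (β⁻¹ - 1) : ℝ) : ℂ) * (p (t * z) + β * (t * z) * deriv p (t * z))) t := by
  have htz := ofReal_mul_mem_unitDisk (Set.Ioo_subset_Icc_self ht) hz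
  have hpt : HasDerivAt (fun s : ℝ => p (s * z)) (deriv p (t * z) * z) t :=
    ((hp.differentiableAt (Metric.isOpen_ball.mem_nhds htz)).hasDerivAt.comp (t : ℂ)
      (hasDerivAt_mul_const z)).comp_ofReal
  have hpow : HasDerivAt (fun s : ℝ => ((s ^ β⁻¹ : ℝ) : ℂ)) ((β⁻¹ * t ^ (β⁻¹ - 1) : ℝ) : ℂ) t :=
    (Real.hasDerivAt_rpow_const (Or.inl ht.1.ne')).ofReal_comp
  refine (hpow.mul hpt).congr_deriv ?_
  have hrpow : t ^ β⁻¹ = t ^ (β⁻¹ - 1) * t := by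
    rw [← Real.rpow_add_one ht.1.ne', sub_add_cancel]
  have hβ' : (β : ℂ) ≠ 0 := ofReal_ne_zero.mpr hβ.ne'
  push_cast [hrpow]
  field_simp

lemma continuousOn_add_mul_deriv_comp_ofReal_mul (hp : DifferentiableOn ℂ p unitDisk)
    (hz : z ∈ unitDisk) :
    ContinuousOn (fun t : ℝ => p (t * z) + β * (t * z) * deriv p (t * z)) (Set.Icc 0 1) := by
  have hmaps : Set.MapsTo (fun t : ℝ => (t : ℂ) * z) (Set.Icc 0 1) unitDisk :=
    fun t ht => ofReal_mul_mem_unitDisk ht hz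
  have hline : Continuous (fun t : ℝ => (t : ℂ) * z) := by fun_prop
  exact (hp.continuousOn.comp hline.continuousOn hmaps).add
    (((continuous_const.mul hline).continuousOn).mul
      ((hp.deriv Metric.isOpen_ball).continuousOn.comp hline.continuousOn hmaps))

theorem eq_integral_of_differentiableOn (hp : DifferentiableOn ℂ p unitDisk) (hβ : 0 < β)
    (hz : z ∈ unitDisk) :
    p z = ∫ t in (0 : ℝ)..1,
      ((β⁻¹ * t ^ (β⁻¹ - 1) : ℝ) : ℂ) * (p (t * z) + β * (t * z) * deriv p (t * z)) := by
  have hmaps : Set.MapsTo (fun t : ℝ => (t : ℂ) * z) (Set.Icc 0 1) unitDisk :=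
    fun t ht => ofReal_mul_mem_unitDisk ht hz
  have hline : Continuous (fun t : ℝ => (t : ℂ) * z) := by fun_prop
  have hF : ContinuousOn (fun s : ℝ => ((s ^ β⁻¹ : ℝ) : ℂ) * p (s * z)) (Set.Icc 0 1) :=
    (continuous_ofReal.comp_continuousOn
      (continuousOn_id.rpow_const fun _ _ => Or.inr (inv_pos.mpr hβ).le)).mul
      (hp.continuousOn.comp hline.continuousOn hmaps)
  rw [intervalIntegral.integral_eq_sub_of_hasDeriv_right_of_le zero_le_one hF
    (fun t ht => (hasDerivAt_rpow_inv_mul_comp hp hβ hz ht).hasDerivWithinAt)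
    (intervalIntegrable_inv_mul_rpow_inv_sub_one_mul hβ
      (continuousOn_add_mul_deriv_comp_ofReal_mul hp hz))]
  simp [Real.zero_rpow (inv_pos.mpr hβ).ne']

theorem norm_sub_one_le_of_norm_add_mul_deriv_sub_one_le (hp : DifferentiableOn ℂ p unitDisk)
    (hβ : 0 < β) {M : ℝ}
    (hM : ∀ ζ ∈ unitDisk, ‖p ζ + β * ζ * deriv p ζ - 1‖ ≤ M * ‖ζ‖) (hz : z ∈ unitDisk) :
    ‖p z - 1‖ ≤ M * ‖z‖ / (β + 1) := by
  have hq := intervalIntegrable_inv_mul_rpow_inv_sub_one_mul hβ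
    (continuousOn_add_mul_deriv_comp_ofReal_mul (β := β) hp hz)
  have hω := intervalIntegrable_inv_mul_rpow_inv_sub_one_mul hβ (g := fun _ => 1) continuousOn_const
  simp only [mul_one] at hω
  have hrep : p z - 1 = ∫ t in (0 : ℝ)..1, ((β⁻¹ * t ^ (β⁻¹ - 1) : ℝ) : ℂ) *
      (p (t * z) + β * (t * z) * deriv p (t * z) - 1) := by
    simp only [mul_sub, mul_one]
    rw [intervalIntegral.integral_sub hq hω, ← eq_integral_of_differentiableOn hp hβ hz,
      intervalIntegral.integral_ofReal, integral_inv_mul_rpow_inv_sub_one hβ, ofReal_one]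
  have hbound : ∀ t ∈ Set.Ioc (0 : ℝ) 1, ‖((β⁻¹ * t ^ (β⁻¹ - 1) : ℝ) : ℂ) *
      (p (t * z) + β * (t * z) * deriv p (t * z) - 1)‖ ≤ M * ‖z‖ * (β⁻¹ * t ^ β⁻¹) := by
    intro t ht
    have ht0 : 0 < t := ht.1
    have hω0 : 0 ≤ β⁻¹ * t ^ (β⁻¹ - 1) := by positivity
    have htz := hM _ (ofReal_mul_mem_unitDisk (Set.Ioc_subset_Icc_self ht) hz)
    rw [norm_mul, norm_real, Real.norm_of_nonneg ht0.le] at htz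
    calc _ = (β⁻¹ * t ^ (β⁻¹ - 1)) * ‖p (t * z) + β * (t * z) * deriv p (t * z) - 1‖ := by
          rw [norm_mul, norm_real, Real.norm_of_nonneg hω0]
      _ ≤ (β⁻¹ * t ^ (β⁻¹ - 1)) * (M * (t * ‖z‖)) := mul_le_mul_of_nonneg_left htz hω0
      _ = M * ‖z‖ * (β⁻¹ * (t ^ (β⁻¹ - 1) * t)) := by ring
      _ = M * ‖z‖ * (β⁻¹ * t ^ β⁻¹) := by rw [← Real.rpow_add_one ht0.ne', sub_add_cancel]
  calc ‖p z - 1‖ ≤ ∫ t in (0 : ℝ)..1, M * ‖z‖ * (β⁻¹ * t ^ β⁻¹) := by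
        rw [hrep]
        refine intervalIntegral.norm_integral_le_of_norm_le zero_le_one
          (MeasureTheory.ae_of_all _ hbound) ?_
        exact ((intervalIntegral.intervalIntegrable_rpow' (by linarith [inv_pos.mpr hβ])).const_mul
          _).const_mul _
    _ = M * ‖z‖ / (β + 1) := by
        rw [intervalIntegral.integral_const_mul, integral_inv_mul_rpow_inv hβ]
        ring

end RadialAverage

lemma Subord.norm_sub_one_le_of_exp {f : ℂ → ℂ} (hf : Subord f exp) {z : ℂ} (hz : z ∈ unitDisk) :
    ‖f z - 1‖ ≤ 2 * ‖z‖ := by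
  obtain ⟨w, hwd, hw0, hw1, hfw⟩ := hf
  have hmaps : Set.MapsTo w (Metric.ball 0 1) (Metric.closedBall 0 1) :=
    fun ζ hζ => mem_closedBall_zero_iff.mpr (hw1 ζ hζ).le
  have hschwarz : ‖w z‖ ≤ ‖z‖ :=
    norm_le_norm_of_mapsTo_ball hwd hmaps hw0 (mem_unitDisk_iff.mp hz)
  rw [hfw z hz]
  exact (norm_exp_sub_one_le (hw1 z hz).le).trans (by linarith)

lemma subord_exp_of_norm_sub_one_le_half {p : ℂ → ℂ} (hp : DifferentiableOn ℂ p unitDisk)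
    (hp0 : p 0 = 1) (hp1 : ∀ z ∈ unitDisk, ‖p z - 1‖ ≤ 1 / 2) : Subord p exp := by
  have hre : ∀ z ∈ unitDisk, 0 < (p z).re := by
    intro z hz
    have := (abs_le.mp ((abs_re_le_norm (p z - 1)).trans (hp1 z hz))).1
    rw [sub_re, one_re] at this
    linarith
  refine ⟨fun z => log (p z), hp.clog fun z hz => Or.inl (hre z hz), by simp [hp0],
    fun z hz => ?_, fun z hz => (exp_log fun h => by simpa [h] using hre z hz).symm⟩
  calc ‖log (p z)‖ = ‖log (1 + (p z - 1))‖ := by rw [add_sub_cancel]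
    _ ≤ 3 / 2 * ‖p z - 1‖ := norm_log_one_add_half_le_self (hp1 z hz)
    _ < 1 := by linarith [hp1 z hz]

theorem stmt_7 (β : ℝ) (hβ : Real.exp 1 ^ 2 + 1 ≤ β)
    (p : ℂ → ℂ) (hp : DifferentiableOn ℂ p unitDisk) (hp0 : p 0 = 1)
    (hsub : Subord (fun z => p z + (β : ℂ) * z * deriv p z) Complex.exp) :
    Subord p Complex.exp := by
  have hβ3 : 3 ≤ β := by nlinarith [Real.add_one_le_exp 1]
  refine subord_exp_of_norm_sub_one_le_half hp hp0 fun z hz => ?_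
  calc ‖p z - 1‖ ≤ 2 * ‖z‖ / (β + 1) :=
        norm_sub_one_le_of_norm_add_mul_deriv_sub_one_le hp (by linarith)
          (fun ζ hζ => hsub.norm_sub_one_le_of_exp hζ) hz
    _ ≤ 1 / 2 := by
        rw [div_le_div_iff₀ (by linarith) two_pos]
        nlinarith [mem_unitDisk_iff.mp hz]
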